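/- Let A be a positive definite real symmetric n×n matrix. Then for every real symmetric n×n matrix B one has tr(AB)^2 ≤ tr(A) · tr(B A^{1/2} B A^{1/2}). (Lemma 3 of the paper, specialized to the positive semidefinite cone.) -/

import Mathlib

/-!
With `S = A^{1/2}` and `T = A^{1/4}`, the inequality is Cauchy–Schwarz for the Frobenius inner
product `⟨X, Y⟩ = tr (Xᵀ Y)` applied to `S` and `T B T`: indeed `⟨S, T B T⟩ = tr (A B)`,
`⟨S, S⟩ = tr A` and `⟨T B T, T B T⟩ = tr (B S B S)`.
-/

open Matrix BigOperators

/- `msqrt A` is the positive semidefinite square root of `A` (junk value `0` when `A` is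
not positive semidefinite). -/
open Classical in
noncomputable def msqrt {n : ℕ} (A : Matrix (Fin n) (Fin n) ℝ) : Matrix (Fin n) (Fin n) ℝ :=
  if h : A.PosSemidef then
    (h.1.eigenvectorUnitary : Matrix (Fin n) (Fin n) ℝ) *
      diagonal ((↑) ∘ Real.sqrt ∘ h.1.eigenvalues) *
      (star h.1.eigenvectorUnitary : Matrix (Fin n) (Fin n) ℝ)
  else 0

/- The matrix geometric mean `X # Y = X^{1/2} (X^{-1/2} Y X^{-1/2})^{1/2} X^{1/2}`. -/
noncomputable def gmean {n : ℕ} (X Y : Matrix (Fin n) (Fin n) ℝ) : Matrix (Fin n) (Fin n) ℝ :=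
  msqrt X * msqrt (msqrt X⁻¹ * Y * msqrt X⁻¹) * msqrt X

open scoped MatrixOrder

theorem msqrt_eq_cfcSqrt {n : ℕ} {A : Matrix (Fin n) (Fin n) ℝ} (hA : A.PosSemidef) :
    msqrt A = CFC.sqrt A := by
  rw [CFC.sqrt_eq_real_sqrt A hA.nonneg, cfcₙ_eq_cfc, hA.1.cfc_eq, IsHermitian.cfc, msqrt,
    dif_pos hA, Unitary.conjStarAlgAut_apply]
  rfl

section
variable {n : Type*} [Fintype n]

theorem sq_trace_transpose_mul_le (X Y : Matrix n n ℝ) :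
    trace (Xᵀ * Y) ^ 2 ≤ trace (Xᵀ * X) * trace (Yᵀ * Y) := by
  simp only [trace, diag_apply, mul_apply, transpose_apply, ← Finset.sum_product']
  simpa only [sq] using
    Finset.sum_mul_sq_le_sq_mul_sq _ (fun p : n × n => X p.2 p.1) (fun p => Y p.2 p.1)

theorem sq_trace_mul_self_mul_le {S T B : Matrix n n ℝ} (hT : T.IsSymm) (hB : B.IsSymm)
    (hTT : T * T = S) :
    trace (S * S * B) ^ 2 ≤ trace (S * S) * trace (B * S * B * S) := by
  have hS : Sᵀ = S := by rw [← hTT, transpose_mul, hT.eq]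
  have h := sq_trace_transpose_mul_le S (T * B * T)
  rw [hS] at h
  have h1 : trace (S * (T * B * T)) = trace (S * S * B) := by
    subst hTT; simpa only [mul_assoc] using trace_mul_comm (T * T * T * B) T
  have h2 : trace ((T * B * T)ᵀ * (T * B * T)) = trace (B * S * B * S) := by
    subst hTT
    simpa only [transpose_mul, hT.eq, hB.eq, mul_assoc] using trace_mul_comm T (B * T * T * B * T)
  rwa [h1, h2] at h
end

theorem stmt3 {n : ℕ} (A : Matrix (Fin n) (Fin n) ℝ) (hA : A.PosDef) :
    ∀ B : Matrix (Fin n) (Fin n) ℝ, B.IsHermitian →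
      (Matrix.trace (A * B)) ^ 2 ≤ Matrix.trace A * Matrix.trace (B * msqrt A * B * msqrt A) := by
  intro B hB
  have hS : CFC.sqrt A * CFC.sqrt A = A := CFC.sqrt_mul_sqrt_self A hA.posSemidef.nonneg
  have hT := (CFC.sqrt_nonneg (CFC.sqrt A)).posSemidef.isHermitian
  have key := sq_trace_mul_self_mul_le (isHermitian_iff_isSymm.mp hT)
    (isHermitian_iff_isSymm.mp hB)
    (CFC.sqrt_mul_sqrt_self _ (CFC.sqrt_nonneg A))
  rwa [hS, ← msqrt_eq_cfcSqrt hA.posSemidef] at key
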